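/- The rank-2 lattice with Gram matrix [[0,3],[3,2]] contains a nonzero element u with ⟨u,u⟩ = 0 (namely the first basis vector), but does not contain two elements e, f with ⟨e,e⟩ = ⟨f,f⟩ = 0 and ⟨e,f⟩ = 1; i.e., the hyperbolic plane H does not embed as a sublattice. -/
import Mathlib

/-- The rank-2 lattice `ℤ²` with Gram matrix `[[0,3],[3,2]]` (so
`⟨(a,b),(c,d)⟩ = 3ad + 3bc + 2bd`) contains a nonzero isotropic element
(the first basis vector), but contains no pair `e, f` with `⟨e,e⟩ = ⟨f,f⟩ = 0`
and `⟨e,f⟩ = 1`: the hyperbolic plane `H` does not embed as a sublattice. -/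
theorem genus_one_no_section :
    (∃ u : ℤ × ℤ, u ≠ 0 ∧ 3 * u.1 * u.2 + 3 * u.2 * u.1 + 2 * u.2 * u.2 = 0) ∧
    ¬∃ e f : ℤ × ℤ,
      3 * e.1 * e.2 + 3 * e.2 * e.1 + 2 * e.2 * e.2 = 0 ∧
      3 * f.1 * f.2 + 3 * f.2 * f.1 + 2 * f.2 * f.2 = 0 ∧
      3 * e.1 * f.2 + 3 * e.2 * f.1 + 2 * e.2 * f.2 = 1 := by
  constructor
  · exact ⟨(1, 0), by simp, by ring⟩
  · rintro ⟨e, f, he, -, h3⟩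
    have h : e.2 * (3 * e.1 + e.2) = 0 := by linarith
    have hd : (3 : ℤ) ∣ 1 := by
      rcases mul_eq_zero.mp h with h0 | h0
      · exact ⟨e.1 * f.2, by rw [← h3, h0]; ring⟩
      · have : e.2 = -3 * e.1 := by linarith
        exact ⟨e.1 * f.2 - 3 * e.1 * f.1 - 2 * e.1 * f.2, by rw [← h3, this]; ring⟩
    omega
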